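/- Let p: ℝ³ → ℂ be defined by p(a,b,c) = (b²−4ac)^{k−1/2} · ((a|z|² + bx + c)/y) / (az² + bz + c)^{k+1} when b² − 4ac > 0, and p(a,b,c) = 0 when b² − 4ac ≤ 0, where z = x + iy ∈ ℍ is fixed and k > 2 is an even integer. Then p satisfies the Vignéras differential equation (E − Δ^{(A)}/(4π)) p = (k−1) p on the open set {(a,b,c) : b² − 4ac > 0}, where E = a∂_a + b∂_b + c∂_c and Δ^{(A)} = −(1/2)∂_a∂_c + (1/2)∂²_b. -/

import Mathlib

open Complex Real

/-- Vignéras' test function `p(a,b,c)` attached to a fixed `z ∈ ℍ` and weight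
parameter `k`. -/
noncomputable def pVig (k : ℕ) (z : ℂ) (v : ℝ × ℝ × ℝ) : ℂ :=
  if 0 < v.2.1 ^ 2 - 4 * v.1 * v.2.2 then
    (((v.2.1 ^ 2 - 4 * v.1 * v.2.2) ^ ((k : ℝ) - 1 / 2) : ℝ) : ℂ)
      * (((v.1 * ‖z‖ ^ 2 + v.2.1 * z.re + v.2.2) / z.im : ℝ) : ℂ)
      / ((v.1 : ℂ) * z ^ 2 + (v.2.1 : ℂ) * z + (v.2.2 : ℂ)) ^ (k + 1)
  else 0

/-- Partial derivative in the first coordinate `a`. -/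
noncomputable def pda (f : ℝ × ℝ × ℝ → ℂ) (v : ℝ × ℝ × ℝ) : ℂ :=
  deriv (fun t : ℝ => f (t, v.2.1, v.2.2)) v.1

/-- Partial derivative in the second coordinate `b`. -/
noncomputable def pdb (f : ℝ × ℝ × ℝ → ℂ) (v : ℝ × ℝ × ℝ) : ℂ :=
  deriv (fun t : ℝ => f (v.1, t, v.2.2)) v.2.1

/-- Partial derivative in the third coordinate `c`. -/
noncomputable def pdc (f : ℝ × ℝ × ℝ → ℂ) (v : ℝ × ℝ × ℝ) : ℂ :=
  deriv (fun t : ℝ => f (v.1, v.2.1, t)) v.2.2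

/-!
On the open cone `disc > 0` the function `p` is the closed form `Q ^ (k - 1/2) · N / D ^ (k + 1)`
in the discriminant `Q` and the two linear forms `N = (a|z|² + bx + c)/y` and
`D = az² + bz + c` (nonvanishing there since `z ∉ ℝ`), so every partial derivative of `p` is a
directional derivative of this closed form, computed by the quotient rule. Since `p` is homogeneous
of degree `2k - 1 + 1 - (k + 1) = k - 1`, the Euler term equals `(k - 1) p`; and `∂_a ∂_c p = ∂_b² p`,
so the Laplacian term vanishes.
-/

open Filter Topology

theorem HasDerivAt.rpow_mul_div_pow {q : ℝ → ℝ} {n d : ℝ → ℂ} {q' : ℝ} {n' d' : ℂ}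
    {t ρ : ℝ} (m : ℕ) (hq : HasDerivAt q q' t) (hn : HasDerivAt n n' t)
    (hd : HasDerivAt d d' t) (hq0 : q t ≠ 0) (hd0 : d t ≠ 0) :
    HasDerivAt (fun s => ((q s ^ ρ : ℝ) : ℂ) * n s / d s ^ (m + 1))
      (((q t ^ (ρ - 1) : ℝ) : ℂ) * (((ρ * q' : ℝ) : ℂ) * n t * d t + (q t : ℂ) * n' * d t
        - ((m : ℂ) + 1) * (q t : ℂ) * n t * d') / d t ^ (m + 2)) t := by
  have h := ((hq.rpow_const (p := ρ) (Or.inl hq0)).ofReal_comp.mul hn).div (hd.pow (m + 1))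
    (pow_ne_zero _ hd0)
  refine h.congr_deriv ?_
  have hsplit : q t ^ ρ = q t ^ (ρ - 1) * q t := by
    rw [← rpow_add_one hq0, sub_add_cancel]
  simp only [Pi.mul_apply, Pi.pow_apply, hsplit]
  field_simp
  push_cast
  ring

section Forms

variable (z : ℂ)

def disc (v : ℝ × ℝ × ℝ) : ℝ := discrim v.1 v.2.1 v.2.2

def discPolar (v w : ℝ × ℝ × ℝ) : ℝ := v.2.1 * w.2.1 - 2 * (v.1 * w.2.2 + v.2.2 * w.1)

noncomputable def quadAt (v : ℝ × ℝ × ℝ) : ℂ := v.1 * z ^ 2 + v.2.1 * z + v.2.2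

noncomputable def hypQuad (v : ℝ × ℝ × ℝ) : ℝ :=
  (v.1 * ‖z‖ ^ 2 + v.2.1 * z.re + v.2.2) / z.im

variable {z}

theorem quadAt_ne_zero (hz : 0 < z.im) {v : ℝ × ℝ × ℝ} (hv : 0 < disc v) :
    quadAt z v ≠ 0 := by
  obtain ⟨a, b, c⟩ := v
  intro h0
  have hre := congrArg re h0
  have him := congrArg im h0
  simp only [quadAt, add_re, add_im, mul_re, mul_im, ofReal_re, ofReal_im, pow_two,
    zero_re, zero_im] at hre him
  have hb : 2 * a * z.re + b = 0 := by
    have : z.im * (2 * a * z.re + b) = 0 := by linear_combination him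
    exact (mul_eq_zero.mp this).resolve_left hz.ne'
  have : disc (a, b, c) = -(2 * a * z.im) ^ 2 := by
    simp only [disc, discrim]
    linear_combination (2 * a * z.re + b) * hb - 4 * a * hre
  nlinarith

theorem pVig_eq {k : ℕ} {v : ℝ × ℝ × ℝ} (hv : 0 < disc v) :
    pVig k z v = ((disc v ^ ((k : ℝ) - 1 / 2) : ℝ) : ℂ) * (hypQuad z v : ℂ)
      / quadAt z v ^ (k + 1) :=
  if_pos hv

theorem continuous_disc : Continuous disc := by
  unfold disc discrim
  fun_prop

theorem eventually_disc_pos {γ : ℝ → ℝ × ℝ × ℝ} {t : ℝ} (hγ : ContinuousAt γ t)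
    (ht : 0 < disc (γ t)) : ∀ᶠ s in 𝓝 t, 0 < disc (γ s) :=
  (continuous_disc.continuousAt.comp hγ).eventually (eventually_gt_nhds ht)

variable {γ : ℝ → ℝ × ℝ × ℝ} {w : ℝ × ℝ × ℝ} {t : ℝ}

theorem HasDerivAt.coords (hγ : HasDerivAt γ w t) :
    HasDerivAt (fun s => (γ s).1) w.1 t ∧ HasDerivAt (fun s => (γ s).2.1) w.2.1 t ∧
      HasDerivAt (fun s => (γ s).2.2) w.2.2 t :=
  ⟨(ContinuousLinearMap.fst ℝ ℝ (ℝ × ℝ)).hasFDerivAt.comp_hasDerivAt t hγ,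
    ((ContinuousLinearMap.fst ℝ ℝ ℝ).comp
      (ContinuousLinearMap.snd ℝ ℝ (ℝ × ℝ))).hasFDerivAt.comp_hasDerivAt t hγ,
    ((ContinuousLinearMap.snd ℝ ℝ ℝ).comp
      (ContinuousLinearMap.snd ℝ ℝ (ℝ × ℝ))).hasFDerivAt.comp_hasDerivAt t hγ⟩

theorem HasDerivAt.disc_comp (hγ : HasDerivAt γ w t) :
    HasDerivAt (fun s => disc (γ s)) (2 * discPolar (γ t) w) t := by
  obtain ⟨h₁, h₂, h₃⟩ := hγ.coords
  refine ((h₂.fun_pow 2).sub ((h₁.const_mul 4).mul h₃)).congr_deriv ?_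
  simp only [discPolar]
  push_cast
  ring

theorem HasDerivAt.discPolar_comp (hγ : HasDerivAt γ w t) (u : ℝ × ℝ × ℝ) :
    HasDerivAt (fun s => discPolar (γ s) u) (discPolar w u) t := by
  obtain ⟨h₁, h₂, h₃⟩ := hγ.coords
  exact (h₂.mul_const u.2.1).sub
    (((h₁.mul_const u.2.2).add (h₃.mul_const u.1)).const_mul 2)

theorem HasDerivAt.quadAt_comp (hγ : HasDerivAt γ w t) :
    HasDerivAt (fun s => quadAt z (γ s)) (quadAt z w) t := by
  obtain ⟨h₁, h₂, h₃⟩ := hγ.coords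
  exact ((h₁.ofReal_comp.mul_const (z ^ 2)).add (h₂.ofReal_comp.mul_const z)).add
    h₃.ofReal_comp

theorem HasDerivAt.hypQuad_comp (hγ : HasDerivAt γ w t) :
    HasDerivAt (fun s => hypQuad z (γ s)) (hypQuad z w) t := by
  obtain ⟨h₁, h₂, h₃⟩ := hγ.coords
  exact (((h₁.mul_const (‖z‖ ^ 2)).add (h₂.mul_const z.re)).add h₃).div_const z.im

end Forms

section Derivatives

noncomputable def dirNum (k : ℕ) (z : ℂ) (w v : ℝ × ℝ × ℝ) : ℂ :=
  ((((k : ℝ) - 1 / 2) * (2 * discPolar v w) : ℝ) : ℂ) * hypQuad z v * quadAt z v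
    + disc v * hypQuad z w * quadAt z v - ((k : ℂ) + 1) * disc v * hypQuad z v * quadAt z w

noncomputable def dirDeriv (k : ℕ) (z : ℂ) (w v : ℝ × ℝ × ℝ) : ℂ :=
  ((disc v ^ ((k : ℝ) - 1 / 2 - 1) : ℝ) : ℂ) * dirNum k z w v / quadAt z v ^ (k + 2)

noncomputable def dirNumDeriv (k : ℕ) (z : ℂ) (u w v : ℝ × ℝ × ℝ) : ℂ :=
  ((((k : ℝ) - 1 / 2) * (2 * discPolar u w) : ℝ) : ℂ) * hypQuad z v * quadAt z v
    + ((((k : ℝ) - 1 / 2) * (2 * discPolar v w) : ℝ) : ℂ)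
      * (hypQuad z u * quadAt z v + hypQuad z v * quadAt z u)
    + (2 * discPolar v u : ℝ) * hypQuad z w * quadAt z v + disc v * hypQuad z w * quadAt z u
    - ((k : ℂ) + 1) * ((2 * discPolar v u : ℝ) * hypQuad z v * quadAt z w
      + disc v * hypQuad z u * quadAt z w)

noncomputable def dirDeriv₂ (k : ℕ) (z : ℂ) (u w v : ℝ × ℝ × ℝ) : ℂ :=
  ((disc v ^ ((k : ℝ) - 1 / 2 - 1 - 1) : ℝ) : ℂ)
    * (((((k : ℝ) - 1 / 2 - 1) * (2 * discPolar v u) : ℝ) : ℂ) * dirNum k z w v * quadAt z v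
      + disc v * dirNumDeriv k z u w v * quadAt z v
      - ((k : ℂ) + 2) * disc v * dirNum k z w v * quadAt z u) / quadAt z v ^ (k + 3)

variable {k : ℕ} {z : ℂ} {γ : ℝ → ℝ × ℝ × ℝ} {u w : ℝ × ℝ × ℝ} {t : ℝ}

theorem hasDerivAt_pVig_comp (hz : 0 < z.im) (hγ : HasDerivAt γ w t) (ht : 0 < disc (γ t)) :
    HasDerivAt (fun s => pVig k z (γ s)) (dirDeriv k z w (γ t)) t :=
  (hγ.disc_comp.rpow_mul_div_pow k hγ.hypQuad_comp.ofReal_comp hγ.quadAt_comp ht.ne'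
    (quadAt_ne_zero hz ht)).congr_of_eventuallyEq
    ((eventually_disc_pos hγ.continuousAt ht).mono fun _ hs => pVig_eq hs)

theorem HasDerivAt.dirNum_comp (hγ : HasDerivAt γ u t) :
    HasDerivAt (fun s => dirNum k z w (γ s)) (dirNumDeriv k z u w (γ t)) t := by
  have hP := (hγ.discPolar_comp w).ofReal_comp
  have hQ := hγ.disc_comp.ofReal_comp
  have hN := hγ.hypQuad_comp (z := z).ofReal_comp
  have hD := hγ.quadAt_comp (z := z)
  have h := ((((hP.const_mul ((2 * ((k : ℝ) - 1 / 2) : ℝ) : ℂ)).mul hN).mul hD).add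
      ((hQ.mul_const (hypQuad z w : ℂ)).mul hD)).sub
    (((hQ.const_mul ((k : ℂ) + 1)).mul hN).mul_const (quadAt z w))
  refine (h.congr_deriv ?_).congr_of_eventuallyEq (.of_forall fun s => ?_)
  · simp only [dirNumDeriv, Pi.mul_apply]
    push_cast
    ring
  · simp only [dirNum, Pi.mul_apply, Pi.add_apply, Pi.sub_apply]
    push_cast
    ring

theorem hasDerivAt_dirDeriv_comp (hz : 0 < z.im) (hγ : HasDerivAt γ u t)
    (ht : 0 < disc (γ t)) :
    HasDerivAt (fun s => dirDeriv k z w (γ s)) (dirDeriv₂ k z u w (γ t)) t := by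
  refine (hγ.disc_comp.rpow_mul_div_pow (k + 1) hγ.dirNum_comp hγ.quadAt_comp ht.ne'
    (quadAt_ne_zero hz ht)).congr_deriv ?_
  simp only [dirDeriv₂]
  push_cast
  ring

end Derivatives

section Partials

variable {k : ℕ} {z : ℂ} {v : ℝ × ℝ × ℝ}

theorem hasDerivAt_line₁ (v : ℝ × ℝ × ℝ) :
    HasDerivAt (fun t : ℝ => (t, v.2.1, v.2.2)) (1, 0, 0) v.1 :=
  (hasDerivAt_id _).prodMk ((hasDerivAt_const _ _).prodMk (hasDerivAt_const _ _))

theorem hasDerivAt_line₂ (v : ℝ × ℝ × ℝ) :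
    HasDerivAt (fun t : ℝ => (v.1, t, v.2.2)) (0, 1, 0) v.2.1 :=
  (hasDerivAt_const _ _).prodMk ((hasDerivAt_id _).prodMk (hasDerivAt_const _ _))

theorem hasDerivAt_line₃ (v : ℝ × ℝ × ℝ) :
    HasDerivAt (fun t : ℝ => (v.1, v.2.1, t)) (0, 0, 1) v.2.2 :=
  (hasDerivAt_const _ _).prodMk ((hasDerivAt_const _ _).prodMk (hasDerivAt_id _))

theorem pda_pVig (hz : 0 < z.im) (hv : 0 < disc v) :
    pda (pVig k z) v = dirDeriv k z (1, 0, 0) v :=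
  (hasDerivAt_pVig_comp hz (hasDerivAt_line₁ v) hv).deriv

theorem pdb_pVig (hz : 0 < z.im) (hv : 0 < disc v) :
    pdb (pVig k z) v = dirDeriv k z (0, 1, 0) v :=
  (hasDerivAt_pVig_comp hz (hasDerivAt_line₂ v) hv).deriv

theorem pdc_pVig (hz : 0 < z.im) (hv : 0 < disc v) :
    pdc (pVig k z) v = dirDeriv k z (0, 0, 1) v :=
  (hasDerivAt_pVig_comp hz (hasDerivAt_line₃ v) hv).deriv

theorem pda_pdc_pVig (hz : 0 < z.im) (hv : 0 < disc v) :
    pda (pdc (pVig k z)) v = dirDeriv₂ k z (1, 0, 0) (0, 0, 1) v :=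
  ((hasDerivAt_dirDeriv_comp hz (hasDerivAt_line₁ v) hv).congr_of_eventuallyEq
    ((eventually_disc_pos (hasDerivAt_line₁ v).continuousAt hv).mono
      fun _ hs => pdc_pVig hz hs)).deriv

theorem pdb_pdb_pVig (hz : 0 < z.im) (hv : 0 < disc v) :
    pdb (pdb (pVig k z)) v = dirDeriv₂ k z (0, 1, 0) (0, 1, 0) v :=
  ((hasDerivAt_dirDeriv_comp hz (hasDerivAt_line₂ v) hv).congr_of_eventuallyEq
    ((eventually_disc_pos (hasDerivAt_line₂ v).continuousAt hv).mono
      fun _ hs => pdb_pVig hz hs)).deriv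

theorem euler_dirDeriv (hz : 0 < z.im) (hv : 0 < disc v) :
    v.1 * dirDeriv k z (1, 0, 0) v + v.2.1 * dirDeriv k z (0, 1, 0) v
      + v.2.2 * dirDeriv k z (0, 0, 1) v = ((k : ℂ) - 1) * pVig k z v := by
  have hnum : v.1 * dirNum k z (1, 0, 0) v + v.2.1 * dirNum k z (0, 1, 0) v
      + v.2.2 * dirNum k z (0, 0, 1) v
      = ((k : ℂ) - 1) * disc v * hypQuad z v * quadAt z v := by
    simp only [dirNum, discPolar, hypQuad, quadAt, disc, discrim]
    push_cast
    ring
  have hsplit : disc v ^ ((k : ℝ) - 1 / 2) = disc v ^ ((k : ℝ) - 1 / 2 - 1) * disc v := by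
    rw [← rpow_add_one hv.ne', sub_add_cancel]
  have hD := quadAt_ne_zero hz hv
  rw [pVig_eq hv, hsplit]
  calc _ = ((disc v ^ ((k : ℝ) - 1 / 2 - 1) : ℝ) : ℂ)
          * (v.1 * dirNum k z (1, 0, 0) v + v.2.1 * dirNum k z (0, 1, 0) v
            + v.2.2 * dirNum k z (0, 0, 1) v) / quadAt z v ^ (k + 2) := by
        simp only [dirDeriv]
        ring
    _ = _ := by
        rw [hnum]
        field_simp
        push_cast
        ring

theorem dirDeriv₂_mixed_eq (v : ℝ × ℝ × ℝ) :
    dirDeriv₂ k z (1, 0, 0) (0, 0, 1) v = dirDeriv₂ k z (0, 1, 0) (0, 1, 0) v := by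
  -- `ring` sees the cancellation only once `re z` and `‖z‖²` are written through `z` and `conj z`.
  have hre : ((z.re : ℝ) : ℂ) = (z + (starRingEnd ℂ) z) / 2 := by
    rw [add_conj]
    push_cast
    ring
  have hnorm : ((‖z‖ : ℝ) : ℂ) ^ 2 = z * (starRingEnd ℂ) z := by
    rw [mul_conj, ← Complex.sq_norm]
    push_cast
    ring
  simp only [dirDeriv₂, dirNumDeriv, dirNum, discPolar, hypQuad, quadAt, disc, discrim]
  push_cast
  rw [hre, hnorm]
  ring

end Partials

theorem stmt14_general (k : ℕ) (z : ℂ) (hz : 0 < z.im)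
    (v : ℝ × ℝ × ℝ) (hd : 0 < v.2.1 ^ 2 - 4 * v.1 * v.2.2) :
    (v.1 : ℂ) * pda (pVig k z) v + (v.2.1 : ℂ) * pdb (pVig k z) v
        + (v.2.2 : ℂ) * pdc (pVig k z) v
      - (1 / (4 * (Real.pi : ℂ))) *
          (-(1 / 2 : ℂ) * pda (pdc (pVig k z)) v
            + (1 / 2 : ℂ) * pdb (pdb (pVig k z)) v)
    = ((k : ℂ) - 1) * pVig k z v := by
  have hv : 0 < disc v := hd
  rw [pda_pdc_pVig hz hv, pdb_pdb_pVig hz hv, dirDeriv₂_mixed_eq, pda_pVig hz hv,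
    pdb_pVig hz hv, pdc_pVig hz hv, euler_dirDeriv hz hv]
  ring

theorem stmt14 (k : ℕ) (hk : 2 < k) (hkeven : Even k) (z : ℂ) (hz : 0 < z.im)
    (v : ℝ × ℝ × ℝ) (hd : 0 < v.2.1 ^ 2 - 4 * v.1 * v.2.2) :
    (v.1 : ℂ) * pda (pVig k z) v + (v.2.1 : ℂ) * pdb (pVig k z) v
        + (v.2.2 : ℂ) * pdc (pVig k z) v
      - (1 / (4 * (Real.pi : ℂ))) *
          (-(1 / 2 : ℂ) * pda (pdc (pVig k z)) v
            + (1 / 2 : ℂ) * pdb (pdb (pVig k z)) v)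
    = ((k : ℂ) - 1) * pVig k z v :=
  stmt14_general k z hz v hd
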